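/- Let A be an n×n nonnegative real matrix with all row sums nonzero, and let L > 0, k ≥ 0 be integers such that A^L is irreducible. Then equality holds in either side (and hence both sides) of min_i (r_i(A^{k+L})/r_i(A^k))^{1/L} ≤ ρ(A) ≤ max_i (r_i(A^{k+L})/r_i(A^k))^{1/L} if and only if the vector x = (r_1(A^k),…,r_n(A^k))ᵀ is an eigenvector of A. -/

import Mathlib

/-!
Put `x = A ^ k *ᵥ 1`, which is positive because no row sum vanishes, and `B = A ^ L`; the
quotients in the bound are then `(B *ᵥ x) i / x i`, and `ρ(B) = ρ(A) ^ L`. For nonnegative `B`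
and positive `x` the Collatz–Wielandt bounds `min ≤ ρ(B) ≤ max` hold: the upper one by comparing
an eigenvector entrywise with `x`, the lower one through Gelfand's formula, since
`c • x ≤ B *ᵥ x` forces `B ^ p` to grow like `c ^ p`. If `B` is irreducible, `(1 + B) ^ (n - 1)`
sends nonzero nonnegative vectors to positive ones; applying it to `x` turns `B *ᵥ x ≤ M • x`
with `B *ᵥ x ≠ M • x` into a strict inequality in every coordinate, hence `ρ(B) < M`, and
likewise on the other side. So equality on either side means `B *ᵥ x = c • x`. As `A` commutes
with `B`, `A *ᵥ x` lies in the same eigenspace of `B`, which irreducibility makes the line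
through `x`. Conversely, if `A *ᵥ x = μ • x` then every quotient is `μ ^ L` and `ρ(A) = μ`.
-/

open Matrix

/-- The spectral radius of a real square matrix: the maximum modulus of its
complex eigenvalues (elements of the spectrum of the matrix over `ℂ`). -/
noncomputable def specRad {n : ℕ} (A : Matrix (Fin n) (Fin n) ℝ) : ℝ :=
  sSup ((fun μ : ℂ => ‖μ‖) '' spectrum ℂ (A.map (fun x : ℝ => (x : ℂ))))

/-- `rowSum A i` is the `i`-th row sum of `A`. -/
noncomputable def rowSum {n : ℕ} (A : Matrix (Fin n) (Fin n) ℝ) (i : Fin n) : ℝ :=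
  ∑ j, A i j

/-- A square matrix is irreducible if it cannot be symmetrically permuted to a
nontrivial block upper-triangular form; equivalently, for every nonempty proper
subset `S` of indices there is a nonzero entry leading from `S` to its complement. -/
def IsIrred {n : ℕ} (A : Matrix (Fin n) (Fin n) ℝ) : Prop :=
  ∀ S : Set (Fin n), S.Nonempty → S ≠ Set.univ → ∃ i ∈ S, ∃ j ∈ Sᶜ, A i j ≠ 0

open Finset

section Nonneg

variable {ι : Type*} [Fintype ι] {C : Matrix ι ι ℝ}

lemma Matrix.mulVec_nonneg_of_nonneg (hC : ∀ i j, 0 ≤ C i j) {v : ι → ℝ} (hv : 0 ≤ v) :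
    0 ≤ C *ᵥ v :=
  fun i => sum_nonneg fun j _ => mul_nonneg (hC i j) (hv j)

lemma Matrix.mulVec_mono_of_nonneg (hC : ∀ i j, 0 ≤ C i j) {u v : ι → ℝ} (huv : u ≤ v) :
    C *ᵥ u ≤ C *ᵥ v := by
  simpa [mulVec_sub] using mulVec_nonneg_of_nonneg hC (sub_nonneg.2 huv)

lemma Matrix.le_one_add_mulVec [DecidableEq ι] (hC : ∀ i j, 0 ≤ C i j) {y : ι → ℝ} (hy : 0 ≤ y) :
    y ≤ (1 + C) *ᵥ y := by
  rw [add_mulVec, one_mulVec]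
  exact le_add_of_nonneg_right (mulVec_nonneg_of_nonneg hC hy)

lemma Matrix.pow_mulVec_of_mulVec_eq_smul [DecidableEq ι] {v : ι → ℝ} {c : ℝ}
    (h : C *ᵥ v = c • v) (p : ℕ) : (C ^ p) *ᵥ v = c ^ p • v := by
  induction p with
  | zero => simp
  | succ p ih => rw [pow_succ', ← mulVec_mulVec, ih, mulVec_smul, h, smul_smul, pow_succ]

lemma Matrix.one_add_mulVec_of_mulVec_eq_smul [DecidableEq ι] {v : ι → ℝ} {c : ℝ}
    (h : C *ᵥ v = c • v) : (1 + C) *ᵥ v = (1 + c) • v := by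
  rw [add_mulVec, one_mulVec, h, add_smul, one_smul]

lemma Matrix.smul_pow_le_pow_mulVec [DecidableEq ι] (hC : ∀ i j, 0 ≤ C i j) {x : ι → ℝ} {c : ℝ}
    (hc : 0 ≤ c) (h : c • x ≤ C *ᵥ x) (p : ℕ) : c ^ p • x ≤ (C ^ p) *ᵥ x := by
  induction p with
  | zero => simp
  | succ p ih =>
    calc c ^ (p + 1) • x = c ^ p • (c • x) := by rw [smul_smul, pow_succ]
      _ ≤ c ^ p • (C *ᵥ x) := smul_le_smul_of_nonneg_left h (pow_nonneg hc p)
      _ = C *ᵥ (c ^ p • x) := (mulVec_smul C _ x).symm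
      _ ≤ C *ᵥ ((C ^ p) *ᵥ x) := mulVec_mono_of_nonneg hC ih
      _ = (C ^ (p + 1)) *ᵥ x := by rw [mulVec_mulVec, pow_succ']

end Nonneg

section Ratio

variable {ι : Type*} [Fintype ι] [Nonempty ι] {x : ι → ℝ}

lemma le_sup'_div_smul (hx : ∀ i, 0 < x i) (v : ι → ℝ) :
    v ≤ (univ.sup' univ_nonempty fun i => v i / x i) • x := fun i =>
  (div_le_iff₀ (hx i)).1 (le_sup' (fun i => v i / x i) (mem_univ i))

lemma inf'_div_smul_le (hx : ∀ i, 0 < x i) (v : ι → ℝ) :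
    (univ.inf' univ_nonempty fun i => v i / x i) • x ≤ v := fun i =>
  (le_div_iff₀ (hx i)).1 (inf'_le (fun i => v i / x i) (mem_univ i))

end Ratio

lemma MonotoneOn.map_finset_sup' {α β ι : Type*} [LinearOrder α] [LinearOrder β] {g : α → β}
    {s : Set α} (hg : MonotoneOn g s) {t : Finset ι} (ht : t.Nonempty) {f : ι → α}
    (hf : ∀ i ∈ t, f i ∈ s) : g (t.sup' ht f) = t.sup' ht (g ∘ f) := by
  obtain ⟨i, hi, heq⟩ := exists_mem_eq_sup' ht f
  rw [heq]
  exact le_antisymm (le_sup' (g ∘ f) hi)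
    (sup'_le _ _ fun j hj => hg (hf j hj) (hf i hi) (heq ▸ le_sup' f hj))

lemma MonotoneOn.map_finset_inf' {α β ι : Type*} [LinearOrder α] [LinearOrder β] {g : α → β}
    {s : Set α} (hg : MonotoneOn g s) {t : Finset ι} (ht : t.Nonempty) {f : ι → α}
    (hf : ∀ i ∈ t, f i ∈ s) : g (t.inf' ht f) = t.inf' ht (g ∘ f) := by
  obtain ⟨i, hi, heq⟩ := exists_mem_eq_inf' ht f
  rw [heq]
  exact le_antisymm (le_inf' _ _ fun j hj => hg (hf i hi) (hf j hj) (heq ▸ inf'_le f hj))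
    (inf'_le (g ∘ f) hi)

section Irreducible

variable {n : ℕ} {C : Matrix (Fin n) (Fin n) ℝ}

noncomputable def posIndices (y : Fin n → ℝ) : Finset (Fin n) := {i | 0 < y i}

lemma mem_posIndices {y : Fin n → ℝ} {i : Fin n} : i ∈ posIndices y ↔ 0 < y i := by
  simp [posIndices]

lemma posIndices_mono {y z : Fin n → ℝ} (h : y ≤ z) : posIndices y ⊆ posIndices z :=
  fun i hi => mem_posIndices.2 (mem_posIndices.1 hi |>.trans_le (h i))

lemma IsIrred.exists_mulVec_pos_of_eq_zero (hC : ∀ i j, 0 ≤ C i j) (hirr : IsIrred C)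
    {y : Fin n → ℝ} (hy : 0 ≤ y) (hy0 : y ≠ 0) (hzero : ∃ i, y i = 0) :
    ∃ i, y i = 0 ∧ 0 < (C *ᵥ y) i := by
  have hS : {i | y i = 0} ≠ Set.univ := fun h =>
    hy0 (funext fun i => (Set.ext_iff.1 h i).2 (Set.mem_univ i))
  obtain ⟨i, hi, j, hj, hCij⟩ := hirr {i | y i = 0} hzero hS
  refine ⟨i, hi, sum_pos' (fun t _ => mul_nonneg (hC i t) (hy t)) ⟨j, mem_univ j, ?_⟩⟩
  exact mul_pos ((hC i j).lt_of_ne' hCij) ((hy j).lt_of_ne' hj)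

lemma IsIrred.card_posIndices_lt (hC : ∀ i j, 0 ≤ C i j) (hirr : IsIrred C)
    {y : Fin n → ℝ} (hy : 0 ≤ y) (hy0 : y ≠ 0) (hzero : ∃ i, y i = 0) :
    #(posIndices y) < #(posIndices ((1 + C) *ᵥ y)) := by
  refine card_lt_card ⟨posIndices_mono (le_one_add_mulVec hC hy), fun hsub => ?_⟩
  obtain ⟨i, hi, hCi⟩ := hirr.exists_mulVec_pos_of_eq_zero hC hy hy0 hzero
  have : 0 < ((1 + C) *ᵥ y) i := by simp [add_mulVec, hi, hCi]
  simpa [hi] using mem_posIndices.1 (hsub (mem_posIndices.2 this))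

lemma IsIrred.min_card_add_le_card_posIndices (hC : ∀ i j, 0 ≤ C i j) (hirr : IsIrred C)
    (m : ℕ) {y : Fin n → ℝ} (hy : 0 ≤ y) (hy0 : y ≠ 0) :
    min n (#(posIndices y) + m) ≤ #(posIndices (((1 + C) ^ m) *ᵥ y)) := by
  induction m generalizing y with
  | zero => simp
  | succ m ih =>
    have hle := le_one_add_mulVec hC hy
    have hy0' : (1 + C) *ᵥ y ≠ 0 := fun h => hy0 (le_antisymm (h ▸ hle) hy)
    have hstep := ih (hy.trans hle) hy0'
    rw [pow_succ, ← mulVec_mulVec]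
    by_cases hzero : ∃ i, y i = 0
    · have := hirr.card_posIndices_lt hC hy hy0 hzero
      omega
    · push Not at hzero
      have hall : posIndices y = univ :=
        eq_univ_of_forall fun i => mem_posIndices.2 ((hy i).lt_of_ne' (hzero i))
      have := card_le_card (posIndices_mono hle)
      simp only [hall, card_univ, Fintype.card_fin] at this ⊢
      omega

lemma IsIrred.one_add_pow_mulVec_pos [NeZero n] (hC : ∀ i j, 0 ≤ C i j) (hirr : IsIrred C)
    {y : Fin n → ℝ} (hy : 0 ≤ y) (hy0 : y ≠ 0) (i : Fin n) :
    0 < (((1 + C) ^ (n - 1)) *ᵥ y) i := by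
  obtain ⟨j, hj⟩ := Function.ne_iff.1 hy0
  have hcard : 0 < #(posIndices y) := card_pos.2 ⟨j, mem_posIndices.2 ((hy j).lt_of_ne' hj)⟩
  have := hirr.min_card_add_le_card_posIndices hC (n - 1) hy hy0
  have hn := NeZero.pos n
  have huniv : posIndices (((1 + C) ^ (n - 1)) *ᵥ y) = univ :=
    eq_univ_of_card _ (le_antisymm (card_le_univ _) (by simp only [Fintype.card_fin]; omega))
  exact mem_posIndices.1 (huniv ▸ mem_univ i)

lemma IsIrred.exists_eq_smul_of_mulVec_eq_smul [NeZero n] (hC : ∀ i j, 0 ≤ C i j)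
    (hirr : IsIrred C) {x y : Fin n → ℝ} {c : ℝ} (hx : ∀ i, 0 < x i)
    (hCx : C *ᵥ x = c • x) (hCy : C *ᵥ y = c • y) : ∃ t : ℝ, y = t • x := by
  set t := univ.inf' univ_nonempty fun i => y i / x i
  obtain ⟨i₀, -, hi₀⟩ := exists_mem_eq_inf' univ_nonempty fun i => y i / x i
  refine ⟨t, by_contra fun hne => ?_⟩
  -- `t` is the largest scalar with `t • x ≤ y`, so `y - t • x` is a nonnegative eigenvector
  -- vanishing at `i₀`, which irreducibility only allows if it is zero.
  set z := y - t • x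
  have hz : 0 ≤ z := sub_nonneg.2 (inf'_div_smul_le hx y)
  have hzi₀ : z i₀ = 0 := by simp [z, t, hi₀, div_mul_cancel₀ _ (hx i₀).ne']
  have hCz : C *ᵥ z = c • z := by
    simp only [z, mulVec_sub, mulVec_smul, hCx, hCy, smul_sub, smul_comm c t]
  have hpos := hirr.one_add_pow_mulVec_pos hC hz (sub_ne_zero.2 hne) i₀
  rw [pow_mulVec_of_mulVec_eq_smul (one_add_mulVec_of_mulVec_eq_smul hCz)] at hpos
  simp [hzi₀] at hpos

end Irreducible

lemma Matrix.mem_spectrum_iff_exists_mulVec_eq_smul {K ι : Type*} [Field K] [Fintype ι]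
    [DecidableEq ι] {M : Matrix ι ι K} {μ : K} :
    μ ∈ spectrum K M ↔ ∃ v ≠ 0, M *ᵥ v = μ • v := by
  rw [spectrum.mem_iff, isUnit_iff_isUnit_det, isUnit_iff_ne_zero, not_not,
    ← exists_mulVec_eq_zero_iff]
  simp only [sub_mulVec, Algebra.algebraMap_eq_smul_one, smul_mulVec, one_mulVec, sub_eq_zero,
    eq_comm]

lemma Matrix.norm_map_ofReal_mulVec_le {ι : Type*} [Fintype ι] {C : Matrix ι ι ℝ}
    (hC : ∀ i j, 0 ≤ C i j) (v : ι → ℂ) (i : ι) :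
    ‖(C.map Complex.ofReal *ᵥ v) i‖ ≤ (C *ᵥ fun j => ‖v j‖) i :=
  calc ‖∑ j, (C i j : ℂ) * v j‖ ≤ ∑ j, ‖(C i j : ℂ) * v j‖ := norm_sum_le _ _
    _ = ∑ j, C i j * ‖v j‖ := by simp [Complex.norm_real, abs_of_nonneg (hC i _)]

lemma Matrix.map_ofReal_pow {ι : Type*} [Fintype ι] [DecidableEq ι] (A : Matrix ι ι ℝ) (p : ℕ) :
    (A ^ p).map Complex.ofReal = A.map Complex.ofReal ^ p :=
  A.map_pow Complex.ofRealHom p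

section SpecRad

variable {n : ℕ}

lemma norm_le_specRad {A : Matrix (Fin n) (Fin n) ℝ} {μ : ℂ}
    (hμ : μ ∈ spectrum ℂ (A.map Complex.ofReal)) : ‖μ‖ ≤ specRad A :=
  le_csSup ((Matrix.finite_spectrum _).image _).bddAbove ⟨μ, hμ, rfl⟩

lemma specRad_nonneg (A : Matrix (Fin n) (Fin n) ℝ) : 0 ≤ specRad A :=
  Real.sSup_nonneg (by rintro _ ⟨μ, -, rfl⟩; exact norm_nonneg μ)

lemma nonempty_spectrum_map_ofReal [NeZero n] (A : Matrix (Fin n) (Fin n) ℝ) :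
    (spectrum ℂ (A.map Complex.ofReal)).Nonempty :=
  spectrum.nonempty_of_isAlgClosed_of_finiteDimensional ℂ _

lemma exists_mem_spectrum_norm_eq_specRad [NeZero n] (A : Matrix (Fin n) (Fin n) ℝ) :
    ∃ μ ∈ spectrum ℂ (A.map Complex.ofReal), ‖μ‖ = specRad A :=
  ((nonempty_spectrum_map_ofReal A).image _).csSup_mem ((Matrix.finite_spectrum _).image _)

lemma specRad_le_of_forall_norm_le [NeZero n] {A : Matrix (Fin n) (Fin n) ℝ} {M : ℝ}
    (h : ∀ μ ∈ spectrum ℂ (A.map Complex.ofReal), ‖μ‖ ≤ M) : specRad A ≤ M :=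
  csSup_le ((nonempty_spectrum_map_ofReal A).image _) (by rintro _ ⟨μ, hμ, rfl⟩; exact h μ hμ)

lemma specRad_pow [NeZero n] (A : Matrix (Fin n) (Fin n) ℝ) {L : ℕ} (hL : 0 < L) :
    specRad (A ^ L) = specRad A ^ L := by
  refine le_antisymm (specRad_le_of_forall_norm_le fun ν hν => ?_) ?_
  · rw [map_ofReal_pow, spectrum.map_pow_of_pos _ hL] at hν
    obtain ⟨μ, hμ, rfl⟩ := hν
    rw [norm_pow]
    exact pow_le_pow_left₀ (norm_nonneg μ) (norm_le_specRad hμ) L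
  · obtain ⟨μ, hμ, hμA⟩ := exists_mem_spectrum_norm_eq_specRad A
    rw [← hμA, ← norm_pow]
    exact norm_le_specRad (map_ofReal_pow A L ▸ spectrum.pow_image_subset _ L ⟨μ, hμ, rfl⟩)

lemma spectralRadius_le_specRad (A : Matrix (Fin n) (Fin n) ℝ) :
    spectralRadius ℂ (A.map Complex.ofReal) ≤ ENNReal.ofReal (specRad A) :=
  iSup₂_le fun μ hμ => by
    rw [← ENNReal.ofReal_coe_nnreal, coe_nnnorm]
    exact ENNReal.ofReal_le_ofReal (norm_le_specRad hμ)

lemma mem_spectrum_of_mulVec_eq_smul {A : Matrix (Fin n) (Fin n) ℝ} {x : Fin n → ℝ} {c : ℝ}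
    (hx : x ≠ 0) (h : A *ᵥ x = c • x) : (c : ℂ) ∈ spectrum ℂ (A.map Complex.ofReal) := by
  refine Matrix.mem_spectrum_iff_exists_mulVec_eq_smul.2 ⟨(↑) ∘ x, ?_, funext fun i => ?_⟩
  · exact fun h0 => hx (funext fun i => Complex.ofReal_injective (congrFun h0 i))
  · exact (Complex.ofRealHom.map_mulVec A x i).symm.trans (by simp [h])

end SpecRad

section CollatzWielandt

open Filter Topology

variable {n : ℕ} [NeZero n] {C : Matrix (Fin n) (Fin n) ℝ} {x : Fin n → ℝ}

lemma norm_le_of_mulVec_le_smul (hC : ∀ i j, 0 ≤ C i j) (hx : ∀ i, 0 < x i) {M : ℝ}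
    (h : C *ᵥ x ≤ M • x) {μ : ℂ} (hμ : μ ∈ spectrum ℂ (C.map Complex.ofReal)) : ‖μ‖ ≤ M := by
  obtain ⟨v, hv0, hv⟩ := mem_spectrum_iff_exists_mulVec_eq_smul.1 hμ
  obtain ⟨i₀, -, hi₀⟩ := exists_mem_eq_sup' univ_nonempty fun i => ‖v i‖ / x i
  set s := univ.sup' univ_nonempty fun i => ‖v i‖ / x i
  have hvs : (fun j => ‖v j‖) ≤ s • x := le_sup'_div_smul hx _
  have hs : ‖v i₀‖ = s * x i₀ := by rw [hi₀, div_mul_cancel₀ _ (hx i₀).ne']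
  have hs_pos : 0 < s := by
    obtain ⟨j, hj⟩ := Function.ne_iff.1 hv0
    exact (div_pos (norm_pos_iff.2 hj) (hx j)).trans_le
      (le_sup' (fun i => ‖v i‖ / x i) (mem_univ j))
  have hvi₀ : 0 < ‖v i₀‖ := hs ▸ mul_pos hs_pos (hx i₀)
  refine le_of_mul_le_mul_right ?_ hvi₀
  calc ‖μ‖ * ‖v i₀‖ = ‖(C.map Complex.ofReal *ᵥ v) i₀‖ := by
        rw [hv, Pi.smul_apply, smul_eq_mul, norm_mul]
    _ ≤ (C *ᵥ fun j => ‖v j‖) i₀ := norm_map_ofReal_mulVec_le hC v i₀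
    _ ≤ (C *ᵥ (s • x)) i₀ := mulVec_mono_of_nonneg hC hvs i₀
    _ = s * (C *ᵥ x) i₀ := by rw [mulVec_smul]; rfl
    _ ≤ s * (M * x i₀) := mul_le_mul_of_nonneg_left (h i₀) hs_pos.le
    _ = M * ‖v i₀‖ := by rw [hs]; ring

lemma specRad_le_of_mulVec_le_smul (hC : ∀ i j, 0 ≤ C i j) (hx : ∀ i, 0 < x i) {M : ℝ}
    (h : C *ᵥ x ≤ M • x) : specRad C ≤ M :=
  specRad_le_of_forall_norm_le fun _ hμ => norm_le_of_mulVec_le_smul hC hx h hμ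

lemma ofReal_le_spectralRadius_of_le_norm_pow {A : Type*} [NormedRing A] [NormedAlgebra ℂ A]
    [CompleteSpace A] (a : A) {c r : ℝ} (hc : 0 ≤ c) (hr : 0 < r)
    (h : ∀ p : ℕ, r * c ^ p ≤ ‖a ^ p‖) : ENNReal.ofReal c ≤ spectralRadius ℂ a := by
  have hlim : Tendsto (fun p : ℕ => r ^ (1 / p : ℝ) * c) atTop (𝓝 c) := by
    simpa using ((Real.continuousAt_const_rpow hr.ne').tendsto.comp
      tendsto_one_div_atTop_nhds_zero_nat).mul_const c
  refine le_of_tendsto_of_tendsto ((ENNReal.continuous_ofReal.tendsto c).comp hlim)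
    (spectrum.pow_norm_pow_one_div_tendsto_nhds_spectralRadius a) ?_
  filter_upwards [eventually_ne_atTop 0] with p hp
  refine ENNReal.ofReal_le_ofReal ?_
  calc r ^ (1 / p : ℝ) * c = (r * c ^ p) ^ (1 / p : ℝ) := by
        rw [Real.mul_rpow hr.le (by positivity), one_div, Real.pow_rpow_inv_natCast hc hp]
    _ ≤ ‖a ^ p‖ ^ (1 / p : ℝ) := Real.rpow_le_rpow (by positivity) (h p) (by positivity)

attribute [local instance] Matrix.linftyOpNormedRing Matrix.linftyOpNormedAlgebra

lemma Matrix.linfty_opNorm_map_ofReal {ι : Type*} [Fintype ι] [DecidableEq ι] (A : Matrix ι ι ℝ) :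
    ‖A.map Complex.ofReal‖ = ‖A‖ := by
  simp [linfty_opNorm_def]

lemma le_specRad_of_smul_le_mulVec (hC : ∀ i j, 0 ≤ C i j) (hx : ∀ i, 0 < x i) {c : ℝ}
    (h : c • x ≤ C *ᵥ x) : c ≤ specRad C := by
  rcases le_or_gt c 0 with hc | hc
  · exact hc.trans (specRad_nonneg C)
  have : CompleteSpace (Matrix (Fin n) (Fin n) ℂ) := FiniteDimensional.complete ℂ _
  have hxn : 0 < ‖x‖ := (hx 0).trans_le ((Real.le_norm_self _).trans (norm_le_pi_norm x 0))
  have hnorm (p : ℕ) : x 0 / ‖x‖ * c ^ p ≤ ‖C.map Complex.ofReal ^ p‖ := by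
    rw [← map_ofReal_pow, linfty_opNorm_map_ofReal, div_mul_eq_mul_div,
      div_le_iff₀ hxn, mul_comm]
    calc c ^ p * x 0 ≤ ((C ^ p) *ᵥ x) 0 := smul_pow_le_pow_mulVec hC hc.le h p 0
      _ ≤ ‖(C ^ p) *ᵥ x‖ := (Real.le_norm_self _).trans (norm_le_pi_norm _ 0)
      _ ≤ ‖C ^ p‖ * ‖x‖ := linfty_opNorm_mulVec _ _
  have := ofReal_le_spectralRadius_of_le_norm_pow _ hc.le (div_pos (hx 0) hxn) hnorm
  exact (ENNReal.ofReal_le_ofReal_iff (specRad_nonneg C)).1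
    (this.trans (spectralRadius_le_specRad C))

lemma specRad_lt_of_mulVec_lt (hC : ∀ i j, 0 ≤ C i j) (hx : ∀ i, 0 < x i) {M : ℝ}
    (h : ∀ i, (C *ᵥ x) i < M * x i) : specRad C < M :=
  (specRad_le_of_mulVec_le_smul hC hx (le_sup'_div_smul hx _)).trans_lt
    ((sup'_lt_iff _).2 fun i _ => (div_lt_iff₀ (hx i)).2 (h i))

lemma lt_specRad_of_lt_mulVec (hC : ∀ i j, 0 ≤ C i j) (hx : ∀ i, 0 < x i) {m : ℝ}
    (h : ∀ i, m * x i < (C *ᵥ x) i) : m < specRad C :=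
  ((lt_inf'_iff _).2 fun i _ => (lt_div_iff₀ (hx i)).2 (h i)).trans_le
    (le_specRad_of_smul_le_mulVec hC hx (inf'_div_smul_le hx _))

lemma specRad_eq_of_mulVec_eq_smul (hC : ∀ i j, 0 ≤ C i j) (hx : ∀ i, 0 < x i) {c : ℝ}
    (h : C *ᵥ x = c • x) : specRad C = c := by
  have hc : 0 ≤ c := by
    have := mulVec_nonneg_of_nonneg hC (fun i => (hx i).le) 0
    rw [h, Pi.smul_apply, smul_eq_mul] at this
    exact nonneg_of_mul_nonneg_left this (hx 0)
  refine le_antisymm (specRad_le_of_mulVec_le_smul hC hx h.le) ?_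
  have hx0 : x ≠ 0 := fun h0 => (hx 0).ne' (congrFun h0 0)
  simpa [abs_of_nonneg hc] using norm_le_specRad (mem_spectrum_of_mulVec_eq_smul hx0 h)

end CollatzWielandt

section StrictBounds

variable {n : ℕ} [NeZero n] {C : Matrix (Fin n) (Fin n) ℝ} {x : Fin n → ℝ}

lemma IsIrred.specRad_lt_of_mulVec_le_smul (hC : ∀ i j, 0 ≤ C i j) (hirr : IsIrred C)
    (hx : ∀ i, 0 < x i) {M : ℝ} (h : C *ᵥ x ≤ M • x) (hne : C *ᵥ x ≠ M • x) :
    specRad C < M := by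
  set P := (1 + C) ^ (n - 1)
  have hPC : C * P = P * C := (((Commute.one_right C).add_right (.refl C)).pow_right _).eq
  have hx0 : x ≠ 0 := fun h0 => (hx 0).ne' (congrFun h0 0)
  have hPx := hirr.one_add_pow_mulVec_pos hC (fun i => (hx i).le) hx0
  have hPz := hirr.one_add_pow_mulVec_pos hC (sub_nonneg.2 h) (sub_ne_zero.2 hne.symm)
  have hCPx : C *ᵥ (P *ᵥ x) = M • (P *ᵥ x) - P *ᵥ (M • x - C *ᵥ x) := by
    rw [mulVec_sub, mulVec_smul, mulVec_mulVec, mulVec_mulVec, hPC, sub_sub_cancel]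
  refine specRad_lt_of_mulVec_lt hC hPx fun i => ?_
  rw [hCPx, Pi.sub_apply, Pi.smul_apply, smul_eq_mul]
  linarith [hPz i]

lemma IsIrred.lt_specRad_of_smul_le_mulVec (hC : ∀ i j, 0 ≤ C i j) (hirr : IsIrred C)
    (hx : ∀ i, 0 < x i) {m : ℝ} (h : m • x ≤ C *ᵥ x) (hne : C *ᵥ x ≠ m • x) :
    m < specRad C := by
  set P := (1 + C) ^ (n - 1)
  have hPC : C * P = P * C := (((Commute.one_right C).add_right (.refl C)).pow_right _).eq
  have hx0 : x ≠ 0 := fun h0 => (hx 0).ne' (congrFun h0 0)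
  have hPx := hirr.one_add_pow_mulVec_pos hC (fun i => (hx i).le) hx0
  have hPz := hirr.one_add_pow_mulVec_pos hC (sub_nonneg.2 h) (sub_ne_zero.2 hne)
  have hCPx : C *ᵥ (P *ᵥ x) = m • (P *ᵥ x) + P *ᵥ (C *ᵥ x - m • x) := by
    rw [mulVec_sub, mulVec_smul, mulVec_mulVec, mulVec_mulVec, hPC, add_sub_cancel]
  refine lt_specRad_of_lt_mulVec hC hPx fun i => ?_
  rw [hCPx, Pi.add_apply, Pi.smul_apply, smul_eq_mul]
  linarith [hPz i]

lemma sup'_div_eq_of_eq_smul (hx : ∀ i, 0 < x i) {v : Fin n → ℝ} {c : ℝ} (h : v = c • x) :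
    univ.sup' univ_nonempty (fun i => v i / x i) = c := by
  simp [h, (hx _).ne']

lemma inf'_div_eq_of_eq_smul (hx : ∀ i, 0 < x i) {v : Fin n → ℝ} {c : ℝ} (h : v = c • x) :
    univ.inf' univ_nonempty (fun i => v i / x i) = c := by
  simp [h, (hx _).ne']

lemma IsIrred.specRad_eq_sup'_iff (hC : ∀ i j, 0 ≤ C i j) (hirr : IsIrred C)
    (hx : ∀ i, 0 < x i) :
    specRad C = univ.sup' univ_nonempty (fun i => (C *ᵥ x) i / x i) ↔
      ∃ c : ℝ, C *ᵥ x = c • x := by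
  set M := univ.sup' univ_nonempty (fun i => (C *ᵥ x) i / x i)
  refine ⟨fun h => ⟨M, by_contra fun hne => ?_⟩, fun ⟨c, hc⟩ => ?_⟩
  · exact (hirr.specRad_lt_of_mulVec_le_smul hC hx (le_sup'_div_smul hx _) hne).ne h
  · exact (specRad_eq_of_mulVec_eq_smul hC hx hc).trans (sup'_div_eq_of_eq_smul hx hc).symm

lemma IsIrred.specRad_eq_inf'_iff (hC : ∀ i j, 0 ≤ C i j) (hirr : IsIrred C)
    (hx : ∀ i, 0 < x i) :
    specRad C = univ.inf' univ_nonempty (fun i => (C *ᵥ x) i / x i) ↔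
      ∃ c : ℝ, C *ᵥ x = c • x := by
  set m := univ.inf' univ_nonempty (fun i => (C *ᵥ x) i / x i)
  refine ⟨fun h => ⟨m, by_contra fun hne => ?_⟩, fun ⟨c, hc⟩ => ?_⟩
  · exact (hirr.lt_specRad_of_smul_le_mulVec hC hx (inf'_div_smul_le hx _) hne).ne' h
  · exact (specRad_eq_of_mulVec_eq_smul hC hx hc).trans (inf'_div_eq_of_eq_smul hx hc).symm

end StrictBounds

section RowSum

variable {n : ℕ}

lemma rowSum_mul (B C : Matrix (Fin n) (Fin n) ℝ) (i : Fin n) :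
    rowSum (B * C) i = (B *ᵥ fun j => rowSum C j) i := by
  simp only [rowSum, mulVec, mul_apply, dotProduct, mul_sum]
  exact sum_comm

lemma rowSum_pow_pos {A : Matrix (Fin n) (Fin n) ℝ} (hA : ∀ i j, 0 ≤ A i j)
    (hr : ∀ i, rowSum A i ≠ 0) (p : ℕ) (i : Fin n) : 0 < rowSum (A ^ p) i := by
  induction p generalizing i with
  | zero => simp [rowSum, one_apply]
  | succ p ih =>
    obtain ⟨j, -, hj⟩ := exists_ne_zero_of_sum_ne_zero (hr i)
    rw [pow_succ', rowSum_mul]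
    exact sum_pos' (fun t _ => mul_nonneg (hA i t) (ih t).le)
      ⟨j, mem_univ j, mul_pos ((hA i j).lt_of_ne' hj) (ih j)⟩

end RowSum

lemma specRad_eq_rpow_inv_iff {n : ℕ} [NeZero n] (A : Matrix (Fin n) (Fin n) ℝ) {L : ℕ}
    (hL : 0 < L) {s : ℝ} (hs : 0 ≤ s) : specRad A = s ^ (L : ℝ)⁻¹ ↔ specRad (A ^ L) = s := by
  rw [eq_comm, Real.rpow_inv_eq hs (specRad_nonneg A) (by positivity), Real.rpow_natCast,
    specRad_pow A hL, eq_comm]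

lemma IsIrred.exists_pow_mulVec_eq_smul_iff {n : ℕ} [NeZero n] {A : Matrix (Fin n) (Fin n) ℝ}
    (hA : ∀ i j, 0 ≤ A i j) {L : ℕ} (hirr : IsIrred (A ^ L)) {x : Fin n → ℝ}
    (hx : ∀ i, 0 < x i) : (∃ c : ℝ, (A ^ L) *ᵥ x = c • x) ↔ ∃ μ : ℝ, A *ᵥ x = μ • x := by
  refine ⟨fun ⟨c, hc⟩ => ?_, fun ⟨μ, hμ⟩ => ⟨μ ^ L, pow_mulVec_of_mulVec_eq_smul hμ L⟩⟩
  have hAx : (A ^ L) *ᵥ (A *ᵥ x) = c • (A *ᵥ x) := by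
    rw [mulVec_mulVec, ← pow_succ, pow_succ', ← mulVec_mulVec, hc, mulVec_smul]
  exact hirr.exists_eq_smul_of_mulVec_eq_smul (pow_apply_nonneg hA L) hx hc hAx

/-- Theorem 4 of the paper, equality part.
For a nonnegative matrix `A` with nonzero row sums such that `A^L` is irreducible,
equality holds on either side (and hence both sides) of Liu's bound iff the vector
`x = (r_1(A^k),…,r_n(A^k))ᵀ` is an eigenvector of `A`. -/
theorem stmt4 {n : ℕ} [NeZero n] (A : Matrix (Fin n) (Fin n) ℝ)
    (hA : ∀ i j, 0 ≤ A i j) (hr : ∀ i, rowSum A i ≠ 0) (L k : ℕ) (hL : 0 < L)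
    (hirr : IsIrred (A ^ L)) :
    (specRad A = Finset.univ.sup' Finset.univ_nonempty
        (fun i => (rowSum (A ^ (k + L)) i / rowSum (A ^ k) i) ^ ((L : ℝ))⁻¹) ↔
      ∃ μ : ℝ, A.mulVec (fun i => rowSum (A ^ k) i) = μ • fun i => rowSum (A ^ k) i) ∧
    (specRad A = Finset.univ.inf' Finset.univ_nonempty
        (fun i => (rowSum (A ^ (k + L)) i / rowSum (A ^ k) i) ^ ((L : ℝ))⁻¹) ↔
      ∃ μ : ℝ, A.mulVec (fun i => rowSum (A ^ k) i) = μ • fun i => rowSum (A ^ k) i) := by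
  set x : Fin n → ℝ := fun i => rowSum (A ^ k) i
  have hx : ∀ i, 0 < x i := rowSum_pow_pos hA hr k
  have hB := pow_apply_nonneg hA L
  have hratio : (fun i => (rowSum (A ^ (k + L)) i / rowSum (A ^ k) i) ^ ((L : ℝ))⁻¹) =
      (· ^ (L : ℝ)⁻¹) ∘ fun i => ((A ^ L) *ᵥ x) i / x i := by
    ext i
    rw [add_comm, pow_add, rowSum_mul]
    rfl
  have hmono := Real.monotoneOn_rpow_Ici_of_exponent_nonneg (r := (L : ℝ)⁻¹) (by positivity)
  have hmem : ∀ i ∈ univ, ((A ^ L) *ᵥ x) i / x i ∈ Set.Ici 0 := fun i _ =>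
    div_nonneg (mulVec_nonneg_of_nonneg hB (fun j => (hx j).le) i) (hx i).le
  rw [hratio, ← hmono.map_finset_sup' univ_nonempty hmem,
    ← hmono.map_finset_inf' univ_nonempty hmem,
    specRad_eq_rpow_inv_iff A hL ((hmem 0 (mem_univ 0)).trans (le_sup' _ (mem_univ 0))),
    specRad_eq_rpow_inv_iff A hL (le_inf' _ _ hmem), hirr.specRad_eq_sup'_iff hB hx,
    hirr.specRad_eq_inf'_iff hB hx, hirr.exists_pow_mulVec_eq_smul_iff hA hx]
  exact ⟨Iff.rfl, Iff.rfl⟩
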